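/- arXiv:2604.24593 — 2 statements merged into one kernel-verified Lean document; each statement's English description precedes it below -/
import Mathlib

section
/- Let n be a finite-dimensional abelian real Lie algebra (so every linear endomorphism of n is a derivation), and let D₁, D₂ be linear endomorphisms of n all of whose eigenvalues have positive real part. Then the expanded Lie algebras n(D₁) and n(D₂) are isomorphic as Lie algebras if and only if there exist an invertible linear map g of n and a real number λ ≠ 0 such that D₁ = λ · g⁻¹ ∘ D₂ ∘ g. -/
/-!
For abelian `n` the bracket of `n(D)` is `[(x, s), (y, t)] = (s • D y - t • D x, 0)`.
Since `0` is not an eigenvalue of `D₁`, `D₁` is invertible, so every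
`(y, 0) = [A_{D₁}, (D₁⁻¹ y, 0)]` is a bracket of `n(D₁)`; hence an isomorphism
`e : n(D₁) ≅ n(D₂)` maps `n × {0}` into the brackets of `n(D₂)`, which lie in `n × {0}`.
Its restriction there is some `g ∈ GL(n)`, and applying `e` to
`[A_{D₁}, (y, 0)] = (D₁ y, 0)` gives `g D₁ = λ • D₂ g`, where `λ ≠ 0` is the
`ℝ`-component of `e A_{D₁}`. Conversely `g × (λ • ·)` is an isomorphism.
-/
open Module

/-- All eigenvalues (complex roots of the characteristic polynomial) of `f` have
positive real part. -/
def PosSpec {V : Type*} [AddCommGroup V] [Module ℝ V] [Module.Finite ℝ V]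
    (f : Module.End ℝ V) : Prop :=
  ∀ z ∈ ((LinearMap.charpoly f).map (algebraMap ℝ ℂ)).roots, 0 < z.re

/-- The bracket of the expanded Lie algebra `n(D) = n ⊕ ℝ`, where `A_D = (0,1)`. -/
def expBracket {L : Type*} [LieRing L] [LieAlgebra ℝ L] (D : Module.End ℝ L)
    (p q : L × ℝ) : L × ℝ :=
  (⁅p.1, q.1⁆ + p.2 • D q.1 - q.2 • D p.1, 0)

/-- The expanded Lie algebras `n(D₁)` and `n(D₂)` are isomorphic as Lie algebras. -/
def ExpIso {L : Type*} [LieRing L] [LieAlgebra ℝ L] (D₁ D₂ : Module.End ℝ L) : Prop :=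
  ∃ e : (L × ℝ) ≃ₗ[ℝ] (L × ℝ), ∀ p q, e (expBracket D₁ p q) = expBracket D₂ (e p) (e q)

theorem PosSpec.injective {V : Type*} [AddCommGroup V] [Module ℝ V] [Module.Finite ℝ V]
    {f : Module.End ℝ V} (hf : PosSpec f) : Function.Injective f := by
  rw [← LinearMap.ker_eq_bot]
  by_contra hker
  have hroot : f.charpoly.IsRoot 0 := by
    rw [← Module.End.hasEigenvalue_iff_isRoot_charpoly, Module.End.hasEigenvalue_iff,
      Module.End.eigenspace_zero]
    exact hker
  have hmem : (0 : ℂ) ∈ (f.charpoly.map (algebraMap ℝ ℂ)).roots := by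
    rw [Polynomial.mem_roots ((LinearMap.charpoly_monic f).map _).ne_zero]
    simpa using hroot.map (f := algebraMap ℝ ℂ)
  exact lt_irrefl _ (hf 0 hmem)

theorem PosSpec.surjective {V : Type*} [AddCommGroup V] [Module ℝ V] [Module.Finite ℝ V]
    {f : Module.End ℝ V} (hf : PosSpec f) : Function.Surjective f :=
  LinearMap.injective_iff_surjective.mp hf.injective

section ExpandedLieAlgebra

variable {L : Type*} [LieRing L] [LieAlgebra ℝ L]

theorem expBracket_zero_one (D : Module.End ℝ L) (y : L) :
    expBracket D (0, 1) (y, 0) = (D y, 0) := by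
  simp [expBracket]

theorem expBracket_of_isLieAbelian [IsLieAbelian L] (D : Module.End ℝ L) (p q : L × ℝ) :
    expBracket D p q = (p.2 • D q.1 - q.2 • D p.1, 0) := by
  simp [expBracket, trivial_lie_zero]

theorem snd_eq_zero_of_map_expBracket {D₁ D₂ : Module.End ℝ L} (hD₁ : Function.Surjective D₁)
    {e : L × ℝ → L × ℝ} (he : ∀ p q, e (expBracket D₁ p q) = expBracket D₂ (e p) (e q))
    (y : L) : (e (y, 0)).2 = 0 := by
  obtain ⟨x, rfl⟩ := hD₁ y
  rw [← expBracket_zero_one, he]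
  rfl

theorem ExpIso.of_conj [IsLieAbelian L] {D₁ D₂ : Module.End ℝ L} (g : L ≃ₗ[ℝ] L) {lam : ℝ}
    (hlam : lam ≠ 0) (hg : ∀ y, g (D₁ y) = lam • D₂ (g y)) : ExpIso D₁ D₂ := by
  refine ⟨g.prodCongr (LinearEquiv.smulOfNeZero ℝ ℝ lam hlam), fun p q => ?_⟩
  simp only [expBracket_of_isLieAbelian, LinearEquiv.prodCongr_apply,
    LinearEquiv.smulOfNeZero_apply, map_sub, map_smul, hg, smul_smul, smul_eq_mul, zero_mul,
    mul_comm lam]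

theorem ExpIso.exists_conj [Module.Finite ℝ L] [IsLieAbelian L] {D₁ D₂ : Module.End ℝ L}
    (hD₁ : Function.Surjective D₁) (h : ExpIso D₁ D₂) :
    ∃ (g : L ≃ₗ[ℝ] L) (lam : ℝ), lam ≠ 0 ∧ ∀ y, g (D₁ y) = lam • D₂ (g y) := by
  obtain ⟨e, he⟩ := h
  set f : L →ₗ[ℝ] L := LinearMap.fst ℝ L ℝ ∘ₗ e.toLinearMap ∘ₗ LinearMap.inl ℝ L ℝ
  have he0 : ∀ y, e (y, 0) = (f y, 0) :=
    fun y => Prod.ext rfl (snd_eq_zero_of_map_expBracket hD₁ he y)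
  have hf : Function.Injective f := fun x y hxy => by
    have : e (x, 0) = e (y, 0) := by rw [he0, he0, hxy]
    exact congrArg Prod.fst (e.injective this)
  let g := LinearEquiv.ofInjectiveEndo f hf
  have hlam : (e (0, 1)).2 ≠ 0 := by
    intro h0
    obtain ⟨x, hx⟩ := g.surjective (e (0, 1)).1
    have : e (x, 0) = e (0, 1) := by rw [he0]; exact Prod.ext hx h0.symm
    simpa using congrArg Prod.snd (e.injective this)
  refine ⟨g, (e (0, 1)).2, hlam, fun y => ?_⟩
  have key := congrArg Prod.fst (he (0, 1) (y, 0))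
  rw [expBracket_zero_one, he0, he0, expBracket_of_isLieAbelian] at key
  simpa [g] using key

end ExpandedLieAlgebra

theorem stmt3_general {n : Type*} [LieRing n] [LieAlgebra ℝ n] [Module.Finite ℝ n]
    [IsLieAbelian n]
    (D₁ D₂ : Module.End ℝ n) (hp₁ : PosSpec D₁) :
    ExpIso D₁ D₂ ↔
      ∃ (g : n ≃ₗ[ℝ] n) (lam : ℝ), lam ≠ 0 ∧
        ∀ y : n, D₁ y = lam • g.symm (D₂ (g y)) := by
  have hconj (g : n ≃ₗ[ℝ] n) (lam : ℝ) (y : n) :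
      D₁ y = lam • g.symm (D₂ (g y)) ↔ g (D₁ y) = lam • D₂ (g y) := by
    rw [← map_smul, LinearEquiv.eq_symm_apply]
  simp_rw [hconj]
  exact ⟨ExpIso.exists_conj hp₁.surjective, fun ⟨g, _, hlam, hg⟩ => ExpIso.of_conj g hlam hg⟩

theorem stmt3 {n : Type*} [LieRing n] [LieAlgebra ℝ n] [Module.Finite ℝ n]
    [IsLieAbelian n]
    (D₁ D₂ : Module.End ℝ n) (hp₁ : PosSpec D₁) (hp₂ : PosSpec D₂) :
    ExpIso D₁ D₂ ↔
      ∃ (g : n ≃ₗ[ℝ] n) (lam : ℝ), lam ≠ 0 ∧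
        ∀ y : n, D₁ y = lam • g.symm (D₂ (g y)) :=
  stmt3_general D₁ D₂ hp₁
end

section
/- Let n₄' be the 4-dimensional real nilpotent Lie algebra with basis e₁,e₂,e₃,e₄ whose only nonzero bracket of basis elements is [e₁,e₂]=e₄, and let D ∈ δ⁺(n₄') have matrix with respect to e₁,e₂,e₃,e₄ with columns (x₁₁,x₂₁,x₃₁,x₄₁), (x₁₂,x₂₂,x₃₂,x₄₂), (0,0,x₃₃,x₄₃), (0,0,0,x₁₁+x₂₂). If x₃₃ ≠ x₁₁+x₂₂ or x₄₃ = 0, then D is conjugate by an automorphism of n₄' to the derivation D₁ whose matrix has the same upper-left 3×3 block as D and fourth row (0,0,0,x₁₁+x₂₂); that is, there exists A ∈ Aut(n₄') with A ∘ D = D₁ ∘ A. -/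
open Module

/-- `D` is a derivation of the real Lie algebra `L`. -/
def IsLieDeriv {L : Type*} [LieRing L] [LieAlgebra ℝ L] (D : Module.End ℝ L) : Prop :=
  ∀ x y : L, D ⁅x, y⁆ = ⁅D x, y⁆ + ⁅x, D y⁆

/-! The conjugating automorphism is the transvection `x ↦ x + φ x • e 3` with `φ (e 3) = 0`: it
preserves brackets because `e 3` is central and spans the derived algebra. Conjugating `D` by it
only changes the fourth row, which becomes `ψ + φ ∘ D - (x11 + x22) φ` for the old fourth row `ψ`,
so it remains to solve a linear system for `φ = (a, b, c, 0)`. The equation for `c` is solvable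
under the case hypothesis, and the one for `(a, b)` has determinant `x11 x22 - x12 x21`, nonzero
since `det D = (x11 x22 - x12 x21) x33 (x11 + x22)` and `0` is not an eigenvalue of `D`. -/

theorem PosSpec.det_ne_zero {V : Type*} [AddCommGroup V] [Module ℝ V] [Module.Finite ℝ V]
    {f : Module.End ℝ V} (hf : PosSpec f) : LinearMap.det f ≠ 0 := by
  intro hdet
  have hcoeff : f.charpoly.coeff 0 = 0 := by
    simpa [hdet] using f.det_eq_sign_charpoly_coeff
  have hroot : (0 : ℂ) ∈ (f.charpoly.map (algebraMap ℝ ℂ)).roots := by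
    rw [Polynomial.mem_roots (f.charpoly_monic.map _).ne_zero, Polynomial.IsRoot,
      ← Polynomial.coeff_zero_eq_eval_zero, Polynomial.coeff_map, hcoeff, map_zero]
  simpa using hf 0 hroot

namespace LinearMap.transvection

variable {R M : Type*} [CommRing R] [AddCommGroup M] [Module R M]

theorem comp_eq_sub_smulRight_comp {f : Module.End R M} {φ ψ : M →ₗ[R] R} {z : M} {s : R}
    (hfz : f z = s • z) (hψz : ψ z = 0) (hφ : φ ∘ₗ f + ψ = s • φ) :
    transvection φ z ∘ₗ f = (f - ψ.smulRight z) ∘ₗ transvection φ z := by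
  ext y
  have hy : φ (f y) = s * φ y - ψ y := by
    have := LinearMap.congr_fun hφ y
    simp only [LinearMap.add_apply, LinearMap.comp_apply, LinearMap.smul_apply,
      smul_eq_mul] at this
    linear_combination this
  simp only [LinearMap.comp_apply, apply, LinearMap.sub_apply, LinearMap.smulRight_apply,
    map_add, map_smul, hfz, hψz, hy]
  module

end LinearMap.transvection

namespace LieEquiv

variable {R L : Type*} [CommRing R] [LieRing L] [LieAlgebra R L]

def transvection {φ : L →ₗ[R] R} {z : L} (hφz : φ z = 0) (hz : ∀ x : L, ⁅x, z⁆ = 0)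
    (hφ : ∀ x y : L, φ ⁅x, y⁆ = 0) : L ≃ₗ⁅R⁆ L :=
  { LinearEquiv.transvection hφz with
    map_lie' := fun {x y} => by
      have hz' : ∀ x : L, ⁅z, x⁆ = 0 := fun x => by rw [← lie_skew, hz, neg_zero]
      simp [LinearMap.transvection.apply, hφ, hz, hz', add_lie, lie_add, lie_smul, smul_lie] }

end LieEquiv

theorem lie_eq_coord_smul_of_basis {R L : Type*} [CommRing R] [LieRing L] [LieAlgebra R L]
    (e : Basis (Fin 4) R L)
    (h12 : ⁅e 0, e 1⁆ = e 3) (h13 : ⁅e 0, e 2⁆ = 0) (h14 : ⁅e 0, e 3⁆ = 0)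
    (h23 : ⁅e 1, e 2⁆ = 0) (h24 : ⁅e 1, e 3⁆ = 0) (h34 : ⁅e 2, e 3⁆ = 0) (x y : L) :
    ⁅x, y⁆ = (e.coord 0 x * e.coord 1 y - e.coord 1 x * e.coord 0 y) • e 3 := by
  have skew {u v w : L} (h : ⁅u, v⁆ = w) : ⁅v, u⁆ = -w := by rw [← lie_skew, h]
  conv_lhs => rw [← e.sum_repr x, ← e.sum_repr y]
  simp only [Fin.sum_univ_four, lie_add, add_lie, lie_smul, smul_lie, lie_self, h12, h13, h14,
    h23, h24, h34, skew h12, skew h13, skew h14, skew h23, skew h24, skew h34]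
  simp only [Basis.coord_apply]
  module

theorem LinearMap.det_eq_of_apply_basis {R M : Type*} [CommRing R] [AddCommGroup M] [Module R M]
    (e : Basis (Fin 4) R M) {D : Module.End R M}
    {x11 x21 x31 x41 x12 x22 x32 x42 x33 x43 x44 : R}
    (h0 : D (e 0) = x11 • e 0 + x21 • e 1 + x31 • e 2 + x41 • e 3)
    (h1 : D (e 1) = x12 • e 0 + x22 • e 1 + x32 • e 2 + x42 • e 3)
    (h2 : D (e 2) = x33 • e 2 + x43 • e 3)
    (h3 : D (e 3) = x44 • e 3) :
    LinearMap.det D = (x11 * x22 - x12 * x21) * x33 * x44 := by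
  rw [← LinearMap.det_toMatrix e]
  have hM : LinearMap.toMatrix e e D =
      !![x11, x12, 0, 0; x21, x22, 0, 0; x31, x32, x33, 0; x41, x42, x43, x44] := by
    ext i j
    fin_cases i <;> fin_cases j <;>
      simp [LinearMap.toMatrix_apply, h0, h1, h2, h3]
  rw [hM, Matrix.det_succ_row_zero]
  simp [Fin.sum_univ_succ, Matrix.det_succ_row_zero, Fin.succAbove]
  ring

theorem exists_conj_coeffs {K : Type*} [Field K]
    {x11 x21 x31 x41 x12 x22 x32 x42 x33 x43 : K}
    (hdet : x11 * x22 - x12 * x21 ≠ 0) (hcase : x33 ≠ x11 + x22 ∨ x43 = 0) :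
    ∃ a b c : K, x11 * a + x21 * b + x31 * c + x41 = (x11 + x22) * a ∧
      x12 * a + x22 * b + x32 * c + x42 = (x11 + x22) * b ∧
      x33 * c + x43 = (x11 + x22) * c := by
  obtain ⟨c, hc⟩ : ∃ c : K, x33 * c + x43 = (x11 + x22) * c := by
    rcases hcase with h | h
    · refine ⟨x43 / (x11 + x22 - x33), ?_⟩
      field_simp [sub_ne_zero.mpr h.symm]
      ring
    · exact ⟨0, by simp [h]⟩
  refine ⟨(x11 * (x31 * c + x41) + x21 * (x32 * c + x42)) / (x11 * x22 - x12 * x21),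
    (x12 * (x31 * c + x41) + x22 * (x32 * c + x42)) / (x11 * x22 - x12 * x21), c, ?_, ?_, hc⟩
  · linear_combination (-(x31 * c + x41)) * mul_inv_cancel₀ hdet
  · linear_combination (-(x32 * c + x42)) * mul_inv_cancel₀ hdet

theorem stmt18_general {L : Type*} [LieRing L] [LieAlgebra ℝ L] [Module.Finite ℝ L]
    (e : Basis (Fin 4) ℝ L)
    (h12 : ⁅e 0, e 1⁆ = e 3) (h13 : ⁅e 0, e 2⁆ = 0) (h14 : ⁅e 0, e 3⁆ = 0)
    (h23 : ⁅e 1, e 2⁆ = 0) (h24 : ⁅e 1, e 3⁆ = 0) (h34 : ⁅e 2, e 3⁆ = 0)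
    (D : Module.End ℝ L) (hpos : PosSpec D)
    (x11 x21 x31 x41 x12 x22 x32 x42 x33 x43 : ℝ)
    (h0 : D (e 0) = x11 • e 0 + x21 • e 1 + x31 • e 2 + x41 • e 3)
    (h1 : D (e 1) = x12 • e 0 + x22 • e 1 + x32 • e 2 + x42 • e 3)
    (h2 : D (e 2) = x33 • e 2 + x43 • e 3)
    (h3 : D (e 3) = (x11 + x22) • e 3)
    (hcase : x33 ≠ x11 + x22 ∨ x43 = 0) :
    ∃ (D₁ : Module.End ℝ L) (A : L ≃ₗ⁅ℝ⁆ L),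
      D₁ (e 0) = x11 • e 0 + x21 • e 1 + x31 • e 2 ∧
      D₁ (e 1) = x12 • e 0 + x22 • e 1 + x32 • e 2 ∧
      D₁ (e 2) = x33 • e 2 ∧
      D₁ (e 3) = (x11 + x22) • e 3 ∧
      ∀ y : L, A (D y) = D₁ (A y) := by
  have hlie := lie_eq_coord_smul_of_basis e h12 h13 h14 h23 h24 h34
  have hdet : x11 * x22 - x12 * x21 ≠ 0 := by
    have := hpos.det_ne_zero
    rw [LinearMap.det_eq_of_apply_basis e h0 h1 h2 h3] at this
    exact left_ne_zero_of_mul (left_ne_zero_of_mul this)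
  obtain ⟨a, b, c, ha, hb, hc⟩ := 
    exists_conj_coeffs (x31 := x31) (x41 := x41) (x32 := x32) (x42 := x42) hdet hcase
  set φ := a • e.coord 0 + b • e.coord 1 + c • e.coord 2
  set ψ := x41 • e.coord 0 + x42 • e.coord 1 + x43 • e.coord 2
  have hφ3 : φ (e 3) = 0 := by simp [φ]
  have hψ3 : ψ (e 3) = 0 := by simp [ψ]
  have hφD : φ ∘ₗ D + ψ = (x11 + x22) • φ := by
    refine e.ext fun i => ?_
    fin_cases i <;> simp [φ, ψ, h0, h1, h2, h3] <;> linarith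
  refine ⟨D - ψ.smulRight (e 3),
    .transvection hφ3 (fun x => by simp [hlie]) (fun x y => by simp [hlie, hφ3]),
    ?_, ?_, ?_, ?_,
    LinearMap.congr_fun (LinearMap.transvection.comp_eq_sub_smulRight_comp h3 hψ3 hφD)⟩ <;>
  simp [ψ, h0, h1, h2, h3]

theorem stmt18 {L : Type*} [LieRing L] [LieAlgebra ℝ L] [Module.Finite ℝ L]
    (e : Basis (Fin 4) ℝ L)
    (h12 : ⁅e 0, e 1⁆ = e 3) (h13 : ⁅e 0, e 2⁆ = 0) (h14 : ⁅e 0, e 3⁆ = 0)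
    (h23 : ⁅e 1, e 2⁆ = 0) (h24 : ⁅e 1, e 3⁆ = 0) (h34 : ⁅e 2, e 3⁆ = 0)
    (D : Module.End ℝ L) (hD : IsLieDeriv D) (hpos : PosSpec D)
    (x11 x21 x31 x41 x12 x22 x32 x42 x33 x43 : ℝ)
    (h0 : D (e 0) = x11 • e 0 + x21 • e 1 + x31 • e 2 + x41 • e 3)
    (h1 : D (e 1) = x12 • e 0 + x22 • e 1 + x32 • e 2 + x42 • e 3)
    (h2 : D (e 2) = x33 • e 2 + x43 • e 3)
    (h3 : D (e 3) = (x11 + x22) • e 3)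
    (hcase : x33 ≠ x11 + x22 ∨ x43 = 0) :
    ∃ (D₁ : Module.End ℝ L) (A : L ≃ₗ⁅ℝ⁆ L),
      D₁ (e 0) = x11 • e 0 + x21 • e 1 + x31 • e 2 ∧
      D₁ (e 1) = x12 • e 0 + x22 • e 1 + x32 • e 2 ∧
      D₁ (e 2) = x33 • e 2 ∧
      D₁ (e 3) = (x11 + x22) • e 3 ∧
      ∀ y : L, A (D y) = D₁ (A y) :=
  stmt18_general e h12 h13 h14 h23 h24 h34 D hpos x11 x21 x31 x41 x12 x22 x32 x42 x33 x43 h0 h1 h2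
    h3 hcase
end
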